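/- Let T_n be the sequence of polynomials defined by T_0(x) = x and T_n(x) = (1 - x²)·T_{n-1}'(x) for n ≥ 1. Then for every integer m > 1, the m-th Bernoulli number satisfies B_m = (1 / 2^{m+1}) · ∫_{-1}^{1} T_{m-1}(x) dx. -/
import Mathlib


open Polynomial Real MeasureTheory

open Finset in
private def St : ℕ → ℕ → ℚ
  | 0, 0 => 1
  | 0, _+1 => 0
  | _+1, 0 => 0
  | n+1, k+1 => (k+1) * St n (k+1) + St n k

private lemma St_zero_right (n : ℕ) : St (n+1) 0 = 0 := rfl

private lemma St_succ (n k : ℕ) : St (n+1) (k+1) = (k+1) * St n (k+1) + St n k := rfl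

private lemma St_eq_zero : ∀ {n k : ℕ}, n < k → St n k = 0
  | 0, 0, h => absurd h (by omega)
  | 0, _+1, _ => rfl
  | _+1, 0, h => absurd h (by omega)
  | n+1, k+1, h => by
      rw [St_succ, St_eq_zero (by omega : n < k+1), St_eq_zero (by omega : n < k)]
      ring

open Finset in
private lemma binom_St (n j : ℕ) :
    ∑ k ∈ range (n+1), (n.choose k : ℚ) * St k j = St (n+1) (j+1) := by
  induction n generalizing j with
  | zero =>
      rw [Finset.sum_range_one, St_succ, St_eq_zero (by omega : 0 < j+1)]
      simp
  | succ n ih =>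
      rw [Finset.sum_range_succ' (fun k => ((n+1).choose k : ℚ) * St k j) (n+1)]
      have h1 : ∑ i ∈ range (n+1), ((n+1).choose (i+1) : ℚ) * St (i+1) j
          = ∑ i ∈ range (n+1), ((n.choose i : ℚ) * St (i+1) j
              + (n.choose (i+1) : ℚ) * St (i+1) j) := by
        refine Finset.sum_congr rfl fun i _ => ?_
        rw [Nat.choose_succ_succ n i]
        push_cast; ring
      rw [h1, Finset.sum_add_distrib]
      have h2 : ∑ i ∈ range (n+1), (n.choose (i+1) : ℚ) * St (i+1) j
          = St (n+1) (j+1) - St 0 j := by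
        have h := Finset.sum_range_succ' (fun k => (n.choose k : ℚ) * St k j) (n+1)
        rw [Finset.sum_range_succ, ih j, Nat.choose_succ_self] at h
        push_cast at h
        simp only [Nat.choose_zero_right, Nat.cast_one, one_mul] at h
        linarith [h]
      have h3 : ∑ i ∈ range (n+1), (n.choose i : ℚ) * St (i+1) j
          = j * St (n+1) (j+1) + St (n+1) j := by
        cases j with
        | zero =>
            simp only [St_zero_right, Nat.cast_zero, zero_mul, mul_zero, zero_add]
            simp [St_zero_right]
        | succ j' =>
            have hs : ∀ i, (St (i+1) (j'+1) : ℚ)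
                = (j'+1) * St i (j'+1) + St i j' := fun i => St_succ i j'
            calc ∑ i ∈ range (n+1), (n.choose i : ℚ) * St (i+1) (j'+1)
                = ∑ i ∈ range (n+1), ((j'+1) * ((n.choose i : ℚ) * St i (j'+1))
                    + (n.choose i : ℚ) * St i j') := by
                  refine Finset.sum_congr rfl fun i _ => ?_
                  rw [hs i]; ring
              _ = _ := by
                  rw [Finset.sum_add_distrib, ← Finset.mul_sum, ih (j'+1), ih j']
                  push_cast; ring
      rw [h2, h3, St_succ (n+1) j]
      simp only [Nat.choose_zero_right, Nat.cast_one, one_mul]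
      push_cast
      ring

open Finset in
private lemma fsum (m : ℕ) :
    ∑ k ∈ range (m+2), (-1:ℚ)^(k+1) * (Nat.factorial (k-1)) * St (m+1) k
      = if m = 0 then 1 else 0 := by
  rw [Finset.sum_range_succ'
    (fun k => (-1:ℚ)^(k+1) * (Nat.factorial (k-1)) * St (m+1) k) (m+1)]
  have h0 : (-1:ℚ)^(0+1) * (Nat.factorial (0-1)) * St (m+1) 0 = 0 := by
    rw [St_zero_right]; ring
  rw [h0, add_zero]
  have key : ∀ j, (-1:ℚ)^(j+1+1) * (Nat.factorial (j+1-1)) * St (m+1) (j+1)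
      = (fun i => (-1:ℚ)^i * (Nat.factorial i) * St m i) j
        - (fun i => (-1:ℚ)^i * (Nat.factorial i) * St m i) (j+1) := by
    intro j
    simp only [Nat.add_sub_cancel]
    rw [St_succ, Nat.factorial_succ]
    push_cast
    ring
  rw [Finset.sum_congr rfl (fun j _ => key j), Finset.sum_range_sub']
  rw [St_eq_zero (by omega : m < m+1)]
  cases m with
  | zero => norm_num [St]
  | succ m' => rw [St_zero_right]; norm_num

open Finset in
private noncomputable def beta (n : ℕ) : ℚ :=
  ∑ k ∈ range (n+1), (-1:ℚ)^k * (Nat.factorial k) / (k+1) * St n k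

open Finset in
private lemma claim (n : ℕ) (hn : 1 ≤ n) :
    ∑ k ∈ range n, (n.choose k : ℚ) * beta k = if n = 1 then 1 else 0 := by
  have hext : ∀ k ∈ range n, (n.choose k : ℚ) * beta k
      = ∑ j ∈ range n, (n.choose k : ℚ)
          * ((-1:ℚ)^j * (Nat.factorial j) / (j+1) * St k j) := by
    intro k hk
    rw [Finset.mem_range] at hk
    rw [beta, Finset.mul_sum]
    apply Finset.sum_subset (by intro x hx; simp at hx ⊢; omega)
    intro j hj hj2
    simp only [Finset.mem_range] at hj hj2
    rw [St_eq_zero (by omega : k < j)]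
    ring
  rw [Finset.sum_congr rfl hext, Finset.sum_comm]
  have hin : ∀ j ∈ range n,
      ∑ k ∈ range n, (n.choose k : ℚ) * ((-1:ℚ)^j * (Nat.factorial j) / (j+1) * St k j)
        = (-1:ℚ)^j * (Nat.factorial j) * St n (j+1) := by
    intro j _
    have hsum : ∑ k ∈ range n, (n.choose k : ℚ) * St k j
        = St (n+1) (j+1) - St n j := by
      have h := binom_St n j
      rw [Finset.sum_range_succ, Nat.choose_self] at h
      push_cast at h
      linarith [h]
    calc ∑ k ∈ range n, (n.choose k : ℚ) * ((-1:ℚ)^j * (Nat.factorial j) / (j+1) * St k j)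
        = ((-1:ℚ)^j * (Nat.factorial j) / (j+1))
            * ∑ k ∈ range n, (n.choose k : ℚ) * St k j := by
          rw [Finset.mul_sum]; exact Finset.sum_congr rfl fun k _ => by ring
      _ = _ := by
          rw [hsum, St_succ]
          have : ((j:ℚ)+1) ≠ 0 := by positivity
          field_simp
          ring
  rw [Finset.sum_congr rfl hin]
  obtain ⟨m, rfl⟩ : ∃ m, n = m + 1 := ⟨n - 1, by omega⟩
  have hf := fsum m
  rw [Finset.sum_range_succ'
    (fun k => (-1:ℚ)^(k+1) * (Nat.factorial (k-1)) * St (m+1) k) (m+1)] at hf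
  have h0 : (-1:ℚ)^(0+1) * (Nat.factorial (0-1)) * St (m+1) 0 = 0 := by
    rw [St_zero_right]; ring
  rw [h0, add_zero] at hf
  have hf2 : ∑ j ∈ range (m+1), (-1:ℚ)^j * (Nat.factorial j) * St (m+1) (j+1)
      = if m = 0 then 1 else 0 := by
    rw [← hf]
    refine Finset.sum_congr rfl fun j _ => ?_
    simp only [Nat.add_sub_cancel]
    ring
  rw [hf2]
  by_cases h : m = 0 <;> simp [h]

open Finset in
private lemma beta_eq_bernoulli (n : ℕ) : beta n = _root_.bernoulli n := by
  induction n using Nat.strong_induction_on with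
  | _ n ih =>
    have hc := claim (n+1) (by omega)
    have hb := _root_.sum_bernoulli (n+1)
    rw [Finset.sum_range_succ] at hc hb
    have he : ∑ k ∈ range n, ((n+1).choose k : ℚ) * beta k
        = ∑ k ∈ range n, ((n+1).choose k : ℚ) * _root_.bernoulli k := by
      refine Finset.sum_congr rfl fun k hk => ?_
      rw [ih k (Finset.mem_range.mp hk)]
    rw [he] at hc
    have heq := hc.trans hb.symm
    have hch : (((n+1).choose n : ℚ)) ≠ 0 := by
      rw [Nat.choose_succ_self_right]
      positivity
    exact mul_left_cancel₀ hch (add_left_cancel heq)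

noncomputable def T : ℕ → Polynomial ℚ
  | 0 => Polynomial.X
  | n + 1 => (1 - Polynomial.X ^ 2) * Polynomial.derivative (T n)

private noncomputable def c (n k : ℕ) : ℚ :=
  (-1:ℚ)^(k+1) * (Nat.factorial (k-1)) * 2^(n+1) / 2^k * St (n+1) k

private lemma c_zero (n : ℕ) : c n 0 = 0 := by rw [c, St_zero_right]; ring

private lemma c_big {n k : ℕ} (h : n+1 < k) : c n k = 0 := by
  rw [c, St_eq_zero h]; ring

private lemma c_rec (n k : ℕ) : c (n+1) k = 2*k*(c n k) - ((k:ℚ)-1) * c n (k-1) := by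
  cases k with
  | zero => simp [c_zero]
  | succ j =>
    simp only [Nat.add_sub_cancel]
    rw [c, c, c, St_succ (n+1) j]
    cases j with
    | zero => rw [St_zero_right]; norm_num [Nat.factorial]; ring
    | succ i =>
      have hf : ((i+1+1-1).factorial : ℚ) = ((i+1):ℚ) * ((i+1-1).factorial : ℚ) := by
        simp only [Nat.add_sub_cancel]
        rw [Nat.factorial_succ]
        push_cast; ring
      rw [hf]
      push_cast
      ring

private lemma per_term (a : ℚ) (k : ℕ) :
    (1 - X^2 : Polynomial ℚ) * (C a * derivative ((1 + X)^k))
      = C (2*k*a) * (1+X)^k - C ((k:ℚ)*a) * (1+X)^(k+1) := by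
  cases k with
  | zero => simp
  | succ j =>
    rw [derivative_pow]
    simp only [derivative_add, derivative_one, derivative_X, zero_add, mul_one,
      Nat.add_sub_cancel]
    simp only [C_mul, Polynomial.C_eq_natCast, map_ofNat]
    push_cast
    ring

open Finset in
private lemma Trep (n : ℕ) (hn : 1 ≤ n) :
    T n = ∑ k ∈ range (n+2), C (c n k) * (1 + X)^k := by
  induction n, hn using Nat.le_induction with
  | base =>
    show (1 - X^2 : Polynomial ℚ) * derivative X = _
    rw [derivative_X]
    have h0 : c 1 0 = 0 := c_zero 1
    have h1 : c 1 1 = 2 := by norm_num [c, St_succ, St_zero_right, St]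
    have h2 : c 1 2 = -1 := by norm_num [c, St_succ, St_zero_right, St]
    rw [Finset.sum_range_succ, Finset.sum_range_succ, Finset.sum_range_one, h0, h1, h2]
    simp only [map_ofNat, map_neg, map_one, map_zero]
    ring
  | succ n hn ih =>
    show (1 - X^2 : Polynomial ℚ) * derivative (T n) = _
    rw [ih, derivative_sum, Finset.mul_sum]
    have hterm : ∀ k ∈ range (n+2),
        (1 - X^2 : Polynomial ℚ) * derivative (C (c n k) * (1 + X)^k)
          = (C (2*k*(c n k)) * (1+X)^k
              - C (((k+1:ℚ)-1) * c n ((k+1)-1)) * (1+X)^(k+1)) := by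
      intro k _
      rw [derivative_C_mul, per_term]
      simp only [Nat.add_sub_cancel, add_sub_cancel_right]
    rw [Finset.sum_congr rfl hterm, Finset.sum_sub_distrib]
    have hA : ∑ k ∈ range (n+2), C (2*(k:ℚ)*(c n k)) * (1+X)^k
        = ∑ k ∈ range (n+3), C (2*(k:ℚ)*(c n k)) * (1+X)^k := by
      rw [Finset.sum_range_succ (fun k => C (2*(k:ℚ)*(c n k)) * (1+X)^k) (n+2),
        c_big (by omega : n+1 < n+2)]
      norm_num
    have hB : ∑ k ∈ range (n+2), C (((k+1:ℚ)-1) * c n ((k+1)-1)) * (1+X)^(k+1)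
        = ∑ k ∈ range (n+3), C (((k:ℚ)-1) * c n (k-1)) * (1+X)^k := by
      rw [Finset.sum_range_succ' (fun k => C (((k:ℚ)-1) * c n (k-1)) * (1+X)^k) (n+2)]
      push_cast
      rw [c_zero]
      norm_num
    rw [hA, hB, ← Finset.sum_sub_distrib]
    refine Finset.sum_congr rfl fun k _ => ?_
    rw [c_rec n k, map_sub]
    push_cast
    ring

open Finset in
private lemma delta_eq (m : ℕ) (hm : 2 ≤ m) :
    ∑ k ∈ range (m+1), (-1:ℚ)^(k+1) * (Nat.factorial (k-1)) / (k+1) * St m k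
      = _root_.bernoulli m := by
  obtain ⟨m', rfl⟩ : ∃ m', m = m' + 1 := ⟨m - 1, by omega⟩
  have hsplit : ∀ k ∈ range (m'+2),
      (-1:ℚ)^(k+1) * (Nat.factorial (k-1)) / (k+1) * St (m'+1) k
        = (-1:ℚ)^(k+1) * (Nat.factorial (k-1)) * St (m'+1) k
          + (-1:ℚ)^k * (Nat.factorial k) / (k+1) * St (m'+1) k := by
    intro k _
    cases k with
    | zero => rw [St_zero_right]; ring
    | succ j =>
      have hf : ((j+1).factorial : ℚ) = ((j+1):ℚ) * ((j+1-1).factorial : ℚ) := by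
        simp only [Nat.add_sub_cancel]
        rw [Nat.factorial_succ]; push_cast; ring
      rw [hf]
      have hj : ((j:ℚ)+1+1) ≠ 0 := by positivity
      field_simp
      push_cast
      ring
  rw [Finset.sum_congr rfl hsplit, Finset.sum_add_distrib, fsum m']
  have hm' : ¬ (m' = 0) := by omega
  rw [if_neg hm', zero_add]
  have hb : ∑ k ∈ range (m'+1+1), (-1:ℚ)^k * (Nat.factorial k) / (k+1) * St (m'+1) k
      = beta (m'+1) := rfl
  rw [hb, beta_eq_bernoulli]

private lemma integ_one_add_pow (k : ℕ) :
    ∫ x in (-1:ℝ)..1, (1+x)^k = 2^(k+1)/(k+1) := by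
  have h := intervalIntegral.integral_comp_add_left (a := (-1:ℝ)) (b := 1)
    (fun u => u^k) 1
  norm_num at h
  exact h

open Finset in
private lemma key (n : ℕ) (hn : 1 ≤ n) :
    ∑ k ∈ range (n+2), c n k * (2^(k+1)/(k+1)) = 2^(n+2) * _root_.bernoulli (n+1) := by
  have h : ∀ k ∈ range (n+2), c n k * (2^(k+1)/(k+1))
      = 2^(n+2) * ((-1:ℚ)^(k+1) * (Nat.factorial (k-1)) / (k+1) * St (n+1) k) := by
    intro k _
    rw [c]
    have h2 : (2:ℚ)^k ≠ 0 := by positivity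
    have hk1 : ((k:ℚ)+1) ≠ 0 := by positivity
    field_simp
    ring
  rw [Finset.sum_congr rfl h, ← Finset.mul_sum, delta_eq (n+1) (by omega)]

theorem bernoulli_eq_integral_T (m : ℕ) (hm : 1 < m) :
    (bernoulli m : ℝ) =
      (1 / 2 ^ (m + 1)) * ∫ x in (-1 : ℝ)..1, (Polynomial.aeval x (T (m - 1)) : ℝ) := by
  obtain ⟨n, rfl⟩ : ∃ n, m = n + 1 := ⟨m - 1, by omega⟩
  have hn : 1 ≤ n := by omega
  simp only [Nat.add_sub_cancel]
  have hrep : ∀ x : ℝ, (Polynomial.aeval x (T n) : ℝ)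
      = ∑ k ∈ Finset.range (n+2), (c n k : ℝ) * (1+x)^k := by
    intro x
    rw [Trep n hn, map_sum]
    refine Finset.sum_congr rfl fun k _ => ?_
    rw [map_mul, map_pow, map_add, map_one, aeval_X, aeval_C, eq_ratCast]
  have hint : (∫ x in (-1:ℝ)..1, (Polynomial.aeval x (T n) : ℝ))
      = ∑ k ∈ Finset.range (n+2), (c n k : ℝ) * (2^(k+1)/(k+1)) := by
    rw [intervalIntegral.integral_congr (g :=
      fun x => ∑ k ∈ Finset.range (n+2), (c n k : ℝ) * (1+x)^k)
      (fun x _ => hrep x)]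
    rw [intervalIntegral.integral_finset_sum (fun k _ => (Continuous.intervalIntegrable (by continuity) _ _ :
      IntervalIntegrable (fun x => (c n k : ℝ) * (1+x)^k) volume (-1) 1))]
    refine Finset.sum_congr rfl fun k _ => ?_
    rw [intervalIntegral.integral_const_mul, integ_one_add_pow]
  rw [hint]
  have hcast := congrArg (fun q : ℚ => (q:ℝ)) (key n hn)
  push_cast at hcast
  rw [hcast]
  have h2 : (2:ℝ)^(n+1+1) ≠ 0 := by positivity
  field_simp
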